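/- arXiv:2412.21020 — 5 statements merged into one kernel-verified Lean document; each statement's English description precedes it below -/
import Mathlib

section
/- Let A, B, C be complex matrices with A and C square. The block matrix M = [[A, B],[B*, C]] is positive semidefinite if and only if A is positive semidefinite, B = AW for some matrix W, and C ⪰ W*AW. -/
/-!
If `B = A * W`, then `M = Uᴴ * fromBlocks A 0 0 (C - Wᴴ * A * W) * U` with the invertible
`U = fromBlocks 1 W 0 1`, so `M` is positive semidefinite iff both diagonal blocks are.
Such a `W` exists whenever `M` is positive semidefinite: writing `M = Nᴴ * N` with
`N = fromCols P Q` gives `A = Pᴴ * P` and `B = Pᴴ * Q`, and `Pᴴ` has the same range as `Pᴴ * P`.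
-/

open Matrix ComplexOrder

namespace Matrix

variable {l m n R : Type*} [Fintype m] [Fintype n]

theorem exists_eq_mul_of_range_mulVecLin_le [CommSemiring R] [DecidableEq n]
    {A : Matrix l m R} {B : Matrix l n R}
    (h : LinearMap.range B.mulVecLin ≤ LinearMap.range A.mulVecLin) :
    ∃ W : Matrix m n R, B = A * W := by
  choose w hw using fun j ↦ h ⟨Pi.single j 1, rfl⟩
  refine ⟨(of w)ᵀ, ?_⟩
  ext i j
  have hwj := congrFun (hw j) i
  simp only [mulVecLin_apply, mulVec_single_one] at hwj
  simpa [mulVec, dotProduct, mul_apply] using hwj.symm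

section StarOrderedField

variable [Field R] [PartialOrder R] [StarRing R] [StarOrderedRing R] [Fintype l]

theorem range_mulVecLin_conjTranspose_mul_self (A : Matrix l m R) :
    LinearMap.range (Aᴴ * A).mulVecLin = LinearMap.range Aᴴ.mulVecLin := by
  refine Submodule.eq_of_le_of_finrank_le ?_ ?_
  · rw [mulVecLin_mul]
    exact LinearMap.range_comp_le_range _ _
  · change Aᴴ.rank ≤ (Aᴴ * A).rank
    rw [rank_conjTranspose_mul_self, rank_conjTranspose]

theorem exists_conjTranspose_mul_eq_conjTranspose_mul_self_mul [DecidableEq n]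
    (P : Matrix l m R) (Q : Matrix l n R) :
    ∃ W : Matrix m n R, Pᴴ * Q = Pᴴ * P * W := by
  refine exists_eq_mul_of_range_mulVecLin_le ?_
  rw [range_mulVecLin_conjTranspose_mul_self, mulVecLin_mul]
  exact LinearMap.range_comp_le_range _ _

end StarOrderedField

section Ring

variable [Ring R] [StarRing R]

theorem posSemidef_fromBlocks_zero_iff [PartialOrder R] [StarOrderedRing R]
    {A : Matrix m m R} {D : Matrix n n R} :
    (fromBlocks A 0 0 D).PosSemidef ↔ A.PosSemidef ∧ D.PosSemidef := by
  refine ⟨fun h ↦ ⟨h.submatrix Sum.inl, h.submatrix Sum.inr⟩, fun ⟨hA, hD⟩ ↦ ?_⟩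
  rw [posSemidef_iff_dotProduct_mulVec] at hA hD ⊢
  refine ⟨hA.1.fromBlocks (by simp) hD.1, fun x ↦ ?_⟩
  rw [← Sum.elim_comp_inl_inr x, fromBlocks_mulVec, Function.star_sumElim,
    sumElim_dotProduct_sumElim]
  simpa using add_nonneg (hA.2 (x ∘ Sum.inl)) (hD.2 (x ∘ Sum.inr))

theorem fromBlocks_mul_eq_conjTranspose_mul_mul [DecidableEq m] [DecidableEq n]
    {A : Matrix m m R} (hA : A.IsHermitian) (W : Matrix m n R) (C : Matrix n n R) :
    fromBlocks A (A * W) (A * W)ᴴ C =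
      (fromBlocks 1 W 0 1)ᴴ * fromBlocks A 0 0 (C - Wᴴ * A * W) * fromBlocks 1 W 0 1 := by
  simp [fromBlocks_conjTranspose, fromBlocks_multiply, conjTranspose_mul, hA.eq, Matrix.mul_assoc]

end Ring

theorem posSemidef_fromBlocks_mul_iff [CommRing R] [PartialOrder R] [StarRing R]
    [StarOrderedRing R] [DecidableEq m] [DecidableEq n]
    {A : Matrix m m R} (hA : A.IsHermitian) (W : Matrix m n R) (C : Matrix n n R) :
    (fromBlocks A (A * W) (A * W)ᴴ C).PosSemidef ↔
      A.PosSemidef ∧ (C - Wᴴ * A * W).PosSemidef := by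
  have hU : IsUnit (fromBlocks 1 W 0 1 : Matrix (m ⊕ n) (m ⊕ n) R) :=
    isUnit_fromBlocks_zero₂₁.mpr ⟨isUnit_one, isUnit_one⟩
  rw [fromBlocks_mul_eq_conjTranspose_mul_mul hA, ← posSemidef_fromBlocks_zero_iff]
  exact hU.posSemidef_star_left_conjugate_iff

open scoped MatrixOrder in
theorem PosSemidef.exists_eq_mul_of_fromBlocks {𝕜 : Type*} [RCLike 𝕜] [DecidableEq m]
    [DecidableEq n] {A : Matrix m m 𝕜} {B : Matrix m n 𝕜} {C : Matrix n n 𝕜}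
    (h : (fromBlocks A B Bᴴ C).PosSemidef) : ∃ W : Matrix m n 𝕜, B = A * W := by
  obtain ⟨N, hN⟩ := CStarAlgebra.nonneg_iff_eq_star_mul_self.mp h.nonneg
  rw [← fromCols_toCols N, star_eq_conjTranspose, conjTranspose_fromCols_eq_fromRows_conjTranspose,
    fromRows_mul_fromCols] at hN
  obtain ⟨hA, hB, -, -⟩ := fromBlocks_inj.mp hN
  obtain ⟨W, hW⟩ := exists_conjTranspose_mul_eq_conjTranspose_mul_self_mul N.toCols₁ N.toCols₂
  exact ⟨W, by rw [hA, hB, hW]⟩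

end Matrix

/-- Block matrix PSD characterization (Albert/Shmul'yan):
`[[A, B], [Bᴴ, C]]` is PSD iff `A` is PSD, `B = A * W` for some `W`, and `C ⪰ Wᴴ * A * W`. -/
theorem stmt_0 {m r : ℕ} (A : Matrix (Fin m) (Fin m) ℂ)
    (B : Matrix (Fin m) (Fin r) ℂ) (C : Matrix (Fin r) (Fin r) ℂ) :
    (Matrix.fromBlocks A B Bᴴ C).PosSemidef ↔
      A.PosSemidef ∧ ∃ W : Matrix (Fin m) (Fin r) ℂ,
        B = A * W ∧ (C - Wᴴ * A * W).PosSemidef := by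
  constructor
  · intro hM
    obtain ⟨W, rfl⟩ := hM.exists_eq_mul_of_fromBlocks
    have hAh : A.IsHermitian := (isHermitian_fromBlocks_iff.mp hM.isHermitian).1
    obtain ⟨hA, hS⟩ := (posSemidef_fromBlocks_mul_iff hAh W C).mp hM
    exact ⟨hA, W, rfl, hS⟩
  · rintro ⟨hA, W, rfl, hS⟩
    exact (posSemidef_fromBlocks_mul_iff hA.isHermitian W C).mpr ⟨hA, hS⟩
end

section
/- Let A, B, C be complex matrices with A and C square such that M = [[A, B],[B*, C]] is positive semidefinite. Then rank M = rank A if and only if C = B* A† B, where A† is the Moore–Penrose pseudoinverse of A. -/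
open Matrix ComplexOrder

/-- Uniqueness of the Moore–Penrose inverse. -/
lemma mp_unique {m : ℕ} (A X Y : Matrix (Fin m) (Fin m) ℂ)
    (hX1 : A * X * A = A) (hX2 : X * A * X = X) (hX3 : (A * X)ᴴ = A * X) (hX4 : (X * A)ᴴ = X * A)
    (hY1 : A * Y * A = A) (hY2 : Y * A * Y = Y) (hY3 : (A * Y)ᴴ = A * Y) (hY4 : (Y * A)ᴴ = Y * A) :
    X = Y := by
  have hAX : A * X = A * Y := by
    calc A * X = (A * X)ᴴ := hX3.symm
    _ = ((A * Y * A) * X)ᴴ := by rw [hY1]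
    _ = (A * X)ᴴ * (A * Y)ᴴ := by simp only [conjTranspose_mul, Matrix.mul_assoc]
    _ = (A * X) * (A * Y) := by rw [hX3, hY3]
    _ = (A * X * A) * Y := by simp only [Matrix.mul_assoc]
    _ = A * Y := by rw [hX1]
  have hXA : X * A = Y * A := by
    calc X * A = (X * A)ᴴ := hX4.symm
    _ = Aᴴ * Xᴴ := by rw [conjTranspose_mul]
    _ = (A * Y * A)ᴴ * Xᴴ := by rw [hY1]
    _ = (Y * A)ᴴ * (X * A)ᴴ := by simp only [conjTranspose_mul, Matrix.mul_assoc]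
    _ = (Y * A) * (X * A) := by rw [hX4, hY4]
    _ = Y * (A * X * A) := by simp only [Matrix.mul_assoc]
    _ = Y * A := by rw [hX1]
  calc X = X * A * X := hX2.symm
  _ = Y * A * X := by rw [hXA]
  _ = Y * (A * X) := by rw [Matrix.mul_assoc]
  _ = Y * (A * Y) := by rw [hAX]
  _ = Y := by rw [← Matrix.mul_assoc, hY2]

/-- Rank of a block-diagonal matrix is the sum of the ranks. -/
lemma rank_fromBlocks_diag {m r : ℕ} (A : Matrix (Fin m) (Fin m) ℂ)
    (S : Matrix (Fin r) (Fin r) ℂ) :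
    (fromBlocks A 0 0 S).rank = A.rank + S.rank := by
  classical
  set e := LinearEquiv.sumArrowLequivProdArrow (Fin m) (Fin r) ℂ ℂ with he
  have key : (fromBlocks A 0 0 S).mulVecLin
      = (e.symm : _ →ₗ[ℂ] _) ∘ₗ (A.mulVecLin.prodMap S.mulVecLin) ∘ₗ (e : _ →ₗ[ℂ] _) := by
    apply LinearMap.ext
    intro v
    have hv : v = Sum.elim (v ∘ Sum.inl) (v ∘ Sum.inr) := by
      funext i; cases i <;> rfl
    funext i
    cases i with
    | inl i =>
      simp [mulVecLin_apply, he, LinearEquiv.sumArrowLequivProdArrow,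
        Equiv.sumArrowEquivProdArrow]
      conv_lhs => rw [hv]
      rw [fromBlocks_mulVec]
      simp [mulVec]
    | inr i =>
      simp [mulVecLin_apply, he, LinearEquiv.sumArrowLequivProdArrow,
        Equiv.sumArrowEquivProdArrow]
      conv_lhs => rw [hv]
      rw [fromBlocks_mulVec]
      simp [mulVec]
  have hrange : LinearMap.range (fromBlocks A 0 0 S).mulVecLin
      = Submodule.map (e.symm : _ →ₗ[ℂ] _)
        ((LinearMap.range A.mulVecLin).prod (LinearMap.range S.mulVecLin)) := by
    rw [key, LinearMap.range_comp, LinearMap.range_comp, LinearEquiv.range, Submodule.map_top]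
    congr 1
    ext ⟨x, y⟩
    simp only [LinearMap.mem_range, Submodule.mem_prod, LinearMap.prodMap_apply, Prod.ext_iff]
    constructor
    · rintro ⟨v, hv1, hv2⟩; exact ⟨⟨v.1, hv1⟩, ⟨v.2, hv2⟩⟩
    · rintro ⟨⟨a, ha⟩, ⟨b, hb⟩⟩; exact ⟨(a, b), ha, hb⟩
  rw [Matrix.rank, hrange, LinearEquiv.finrank_map_eq]
  rw [Matrix.rank, Matrix.rank]
  -- finrank of a product submodule
  set p := LinearMap.range A.mulVecLin
  set q := LinearMap.range S.mulVecLin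
  let e2 : (p.prod q) ≃ₗ[ℂ] p × q :=
    { toFun := fun z => (⟨z.1.1, z.2.1⟩, ⟨z.1.2, z.2.2⟩)
      invFun := fun z => ⟨(z.1.1, z.2.1), ⟨z.1.2, z.2.2⟩⟩
      map_add' := fun _ _ => rfl
      map_smul' := fun _ _ => rfl
      left_inv := fun _ => rfl
      right_inv := fun _ => rfl }
  rw [e2.finrank_eq, Module.finrank_prod]
/-- For a PSD block matrix `[[A, B], [Bᴴ, C]]`, the rank equals `rank A` iff
`C = Bᴴ A† B`, where `A†` is the Moore–Penrose inverse of `A` (characterized by the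
four Penrose equations). -/
theorem stmt_1 {m r : ℕ} (A : Matrix (Fin m) (Fin m) ℂ)
    (B : Matrix (Fin m) (Fin r) ℂ) (C : Matrix (Fin r) (Fin r) ℂ)
    (hM : (Matrix.fromBlocks A B Bᴴ C).PosSemidef)
    (Ad : Matrix (Fin m) (Fin m) ℂ)
    (h1 : A * Ad * A = A) (h2 : Ad * A * Ad = Ad)
    (h3 : (A * Ad)ᴴ = A * Ad) (h4 : (Ad * A)ᴴ = Ad * A) :
    (Matrix.fromBlocks A B Bᴴ C).rank = A.rank ↔ C = Bᴴ * Ad * B := by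
  classical
  -- A and C are Hermitian
  have hHerm := hM.isHermitian
  rw [Matrix.IsHermitian, fromBlocks_conjTranspose] at hHerm
  have hA : Aᴴ = A := by simpa using congrArg Matrix.toBlocks₁₁ hHerm
  have hC : Cᴴ = C := by simpa using congrArg Matrix.toBlocks₂₂ hHerm
  -- Ad is Hermitian
  have hAdH : Adᴴ = Ad := by
    apply mp_unique A Adᴴ Ad _ _ _ _ h1 h2 h3 h4
    · have := congrArg conjTranspose h1
      simpa only [conjTranspose_mul, hA, Matrix.mul_assoc] using this
    · have := congrArg conjTranspose h2
      simpa only [conjTranspose_mul, hA, Matrix.mul_assoc] using this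
    · have e : A * Adᴴ = Ad * A := by
        calc A * Adᴴ = Aᴴ * Adᴴ := by rw [hA]
        _ = (Ad * A)ᴴ := by rw [conjTranspose_mul]
        _ = Ad * A := h4
      rw [e, h4]
    · have e : Adᴴ * A = A * Ad := by
        calc Adᴴ * A = Adᴴ * Aᴴ := by rw [hA]
        _ = (A * Ad)ᴴ := by rw [conjTranspose_mul]
        _ = A * Ad := h3
      rw [e, h3]
  -- kernel inclusion: A x = 0 → Bᴴ x = 0
  have claim : ∀ x : Fin m → ℂ, A *ᵥ x = 0 → Bᴴ *ᵥ x = 0 := by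
    intro x hx
    set v : (Fin m ⊕ Fin r) → ℂ := Sum.elim x 0 with hvdef
    have hMv' : (fromBlocks A B Bᴴ C) *ᵥ v = Sum.elim (0 : Fin m → ℂ) (Bᴴ *ᵥ x) := by
      rw [hvdef, fromBlocks_mulVec]
      simp [hx]
    have hdot : star v ⬝ᵥ (fromBlocks A B Bᴴ C) *ᵥ v = 0 := by
      rw [hMv', hvdef]
      simp [dotProduct, Fintype.sum_sum_type]
    have hMv0 := (hM.dotProduct_mulVec_zero_iff v).mp hdot
    rw [hMv'] at hMv0
    funext i
    exact congrFun hMv0 (Sum.inr i)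
  -- B lies in the range of A
  have hA0 : A * (1 - Ad * A) = 0 := by
    rw [Matrix.mul_sub, Matrix.mul_one, ← Matrix.mul_assoc, h1, sub_self]
  have hcols : Bᴴ * (1 - Ad * A) = 0 := by
    ext i j
    set w : Fin m → ℂ := fun k => (1 - Ad * A) k j with hwdef
    have hxv : A *ᵥ w = 0 := by
      funext i'
      have h0 : (A * (1 - Ad * A)) i' j = 0 := by rw [hA0]; rfl
      simpa [hwdef, Matrix.mulVec, dotProduct, Matrix.mul_apply] using h0
    have hbi := congrFun (claim w hxv) i
    simp only [Matrix.mulVec, dotProduct, hwdef, Pi.zero_apply] at hbi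
    simpa [Matrix.mul_apply] using hbi
  have hB1 : Bᴴ * Ad * A = Bᴴ := by
    have h' : Bᴴ - Bᴴ * (Ad * A) = 0 := by
      calc Bᴴ - Bᴴ * (Ad * A)
          = Bᴴ * ((1 : Matrix (Fin m) (Fin m) ℂ) - Ad * A) := by
            rw [Matrix.mul_sub, Matrix.mul_one]
      _ = 0 := hcols
    have := sub_eq_zero.mp h'
    rw [Matrix.mul_assoc]
    exact this.symm
  have hAB : A * Ad * B = B := by
    have := congrArg conjTranspose hB1
    simpa only [conjTranspose_mul, conjTranspose_conjTranspose, hA, hAdH,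
      Matrix.mul_assoc] using this
  -- factorization M = Lᴴ D L
  set S : Matrix (Fin r) (Fin r) ℂ := C - Bᴴ * Ad * B with hSdef
  set D : Matrix (Fin m ⊕ Fin r) (Fin m ⊕ Fin r) ℂ := fromBlocks A 0 0 S with hDdef
  set L : Matrix (Fin m ⊕ Fin r) (Fin m ⊕ Fin r) ℂ := fromBlocks 1 (Ad * B) 0 1 with hLdef
  have hLH : Lᴴ = fromBlocks 1 0 (Bᴴ * Ad) 1 := by
    rw [hLdef, fromBlocks_conjTranspose]
    simp [conjTranspose_mul, hAdH]
  have hfact : fromBlocks A B Bᴴ C = Lᴴ * D * L := by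
    rw [hLH, hDdef, hLdef, fromBlocks_multiply, fromBlocks_multiply]
    simp only [Matrix.one_mul, Matrix.mul_one, Matrix.zero_mul, Matrix.mul_zero,
      add_zero, zero_add]
    refine fromBlocks_inj.mpr ⟨rfl, ?_, ?_, ?_⟩
    · rw [← Matrix.mul_assoc, hAB]
    · rw [hB1]
    · have e : Ad * (A * (Ad * B)) = Ad * A * Ad * B := by simp only [Matrix.mul_assoc]
      simp only [Matrix.mul_assoc]
      rw [e, h2]
      simp only [← Matrix.mul_assoc]
      rw [hSdef]
      abel
  -- L is invertible
  have hdetL : IsUnit L.det := by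
    rw [hLdef, det_fromBlocks_zero₂₁]
    simp
  have hdetLH : IsUnit Lᴴ.det := by
    rw [hLH, det_fromBlocks_zero₁₂]
    simp
  -- rank M = rank A + rank S
  have hrank : (fromBlocks A B Bᴴ C).rank = A.rank + S.rank := by
    rw [hfact, Matrix.mul_assoc, rank_mul_eq_right_of_isUnit_det _ _ hdetLH,
      rank_mul_eq_left_of_isUnit_det _ _ hdetL, hDdef, rank_fromBlocks_diag]
  constructor
  · intro h
    rw [hrank] at h
    have hS0 : S.rank = 0 := by omega
    have hS : S = 0 := by
      have hrange : LinearMap.range S.mulVecLin = ⊥ := by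
        rw [← Submodule.finrank_eq_zero (R := ℂ)]
        exact hS0
      have hmv : ∀ y, S *ᵥ y = 0 := by
        intro y
        have hy : S.mulVecLin y ∈ LinearMap.range S.mulVecLin := LinearMap.mem_range_self _ y
        rw [hrange, Submodule.mem_bot] at hy
        exact hy
      ext i j
      have := congrFun (hmv (Pi.single j 1)) i
      simpa [Matrix.mulVec, dotProduct, Pi.single_apply] using this
    have h6 : C - Bᴴ * Ad * B = 0 := by rw [← hSdef]; exact hS
    rw [sub_eq_zero] at h6
    exact h6
  · intro h
    have hS0 : S = 0 := by rw [hSdef, h, sub_self]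
    rw [hrank, hS0, Matrix.rank_zero]
    omega
end

section
/- Let A be a real symmetric positive semidefinite k×k matrix, c ∈ ℝ^k, and t ∈ ℝ. The bordered matrix [[A, c],[cᵀ, t]] is positive semidefinite and has the same rank as A if and only if c = Aw for some w ∈ ℝ^k and t = cᵀ A† c, where A† is the Moore–Penrose inverse. -/
/-!
If `c = A w`, the bordered matrix is congruent, through the unitriangular matrix `[[1, w], [0, 1]]`,
to `diag(A, t - c ⬝ᵥ w)`. Its rank is therefore `rank A` exactly when this Schur complement
vanishes, and it is then positive semidefinite; when `c ∈ range A`, the first Penrose equation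
makes `w = A† c` such a `w`. Conversely, positive semidefiniteness forces `c ⟂ ker A`: for `A r = 0` the vector `(r, 0)` is
isotropic, hence in the kernel of the bordered matrix, whose last row gives `c ⬝ᵥ r = 0`. Since
`A A†` is symmetric, `c - A A† c` lies in `ker A` and in `(ker A)ᗮ`, so `A A† c = c`.
-/

open Matrix
open scoped ComplexOrder

theorem Submodule.finrank_prod {K V W : Type*} [DivisionRing K] [AddCommGroup V] [Module K V]
    [AddCommGroup W] [Module K W] [FiniteDimensional K V] [FiniteDimensional K W]
    (p : Submodule K V) (q : Submodule K W) :
    Module.finrank K (p.prod q) = Module.finrank K p + Module.finrank K q := by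
  have hinj : Function.Injective (p.subtype.prodMap q.subtype) :=
    Prod.map_injective.mpr ⟨p.injective_subtype, q.injective_subtype⟩
  rw [← Module.finrank_prod, ← LinearMap.finrank_range_of_inj hinj, LinearMap.range_prodMap,
    Submodule.range_subtype, Submodule.range_subtype]

namespace Matrix

variable {m n R : Type*}

section Blocks

variable [Fintype m] [Fintype n]

theorem rank_fromBlocks_zero_zero [Field R] (A : Matrix m m R) (D : Matrix n n R) :
    (fromBlocks A 0 0 D).rank = A.rank + D.rank := by
  let e := LinearEquiv.sumArrowLequivProdArrow m n R R
  have hconj : (fromBlocks A 0 0 D).mulVecLin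
      = e.symm.toLinearMap ∘ₗ (A.mulVecLin.prodMap D.mulVecLin) ∘ₗ e.toLinearMap := by
    refine LinearMap.ext fun v => ?_
    rw [← Sum.elim_comp_inl_inr v]
    simp [e, fromBlocks_mulVec, LinearEquiv.sumArrowLequivProdArrow, Equiv.sumArrowEquivProdArrow]
  rw [rank, rank, rank, hconj, LinearMap.range_comp, LinearMap.range_comp_of_range_eq_top _ e.range,
    LinearEquiv.finrank_map_eq, LinearMap.range_prodMap, Submodule.finrank_prod]

theorem PosSemidef.fromBlocks_zero_zero [CommRing R] [PartialOrder R] [StarRing R]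
    [StarOrderedRing R] {A : Matrix m m R} {D : Matrix n n R} (hA : A.PosSemidef)
    (hD : D.PosSemidef) : (fromBlocks A 0 0 D).PosSemidef := by
  refine .of_dotProduct_mulVec_nonneg ?_ fun x => ?_
  · rw [isHermitian_fromBlocks_iff]
    exact ⟨hA.isHermitian, by simp, by simp, hD.isHermitian⟩
  · rw [← Sum.elim_comp_inl_inr x, fromBlocks_mulVec, Function.star_sumElim,
      sumElim_dotProduct_sumElim]
    simp only [zero_mulVec, add_zero, zero_add]
    exact add_nonneg (hA.dotProduct_mulVec_nonneg _) (hD.dotProduct_mulVec_nonneg _)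

theorem PosSemidef.fromBlocks_conjTranspose_mulVec_eq_zero {𝕜 : Type*} [RCLike 𝕜] {A : Matrix m m 𝕜}
    {B : Matrix m n 𝕜} {D : Matrix n n 𝕜} (h : (fromBlocks A B Bᴴ D).PosSemidef) {x : m → 𝕜}
    (hx : A *ᵥ x = 0) : Bᴴ *ᵥ x = 0 := by
  have hzero : fromBlocks A B Bᴴ D *ᵥ Sum.elim x 0 = Sum.elim (0 : m → 𝕜) (Bᴴ *ᵥ x) := by
    rw [fromBlocks_mulVec]
    simp [hx]
  have hquad : star (Sum.elim x 0) ⬝ᵥ fromBlocks A B Bᴴ D *ᵥ Sum.elim x 0 = 0 := by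
    rw [hzero, Function.star_sumElim, sumElim_dotProduct_sumElim]
    simp
  have := (h.dotProduct_mulVec_zero_iff _).mp hquad
  rw [hzero] at this
  exact funext fun i => congrFun this (Sum.inr i)

variable [DecidableEq m] [DecidableEq n]

theorem fromBlocks_eq_conjTranspose_mul_mul [CommRing R] [StarRing R] {A : Matrix m m R}
    (hA : A.IsHermitian) {B W : Matrix m n R} (hW : A * W = B) (D : Matrix n n R) :
    fromBlocks A B Bᴴ D
      = (fromBlocks 1 W 0 1)ᴴ * fromBlocks A 0 0 (D - Bᴴ * W) * fromBlocks 1 W 0 1 := by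
  have hWA : Wᴴ * A = Bᴴ := by rw [← hW, conjTranspose_mul, hA.eq]
  rw [fromBlocks_conjTranspose, fromBlocks_multiply, fromBlocks_multiply]
  simp [hW, hWA]

theorem rank_fromBlocks_of_mul_eq [Field R] [StarRing R] {A : Matrix m m R}
    (hA : A.IsHermitian) {B W : Matrix m n R} (hW : A * W = B) (D : Matrix n n R) :
    (fromBlocks A B Bᴴ D).rank = A.rank + (D - Bᴴ * W).rank := by
  have hdet : IsUnit (fromBlocks (1 : Matrix m m R) W 0 1).det := by simp
  rw [fromBlocks_eq_conjTranspose_mul_mul hA hW, Matrix.mul_assoc,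
    rank_mul_eq_right_of_isUnit_det _ _ (by simp),
    rank_mul_eq_left_of_isUnit_det _ _ hdet, rank_fromBlocks_zero_zero]

theorem PosSemidef.fromBlocks_of_mul_eq [CommRing R] [PartialOrder R] [StarRing R]
    [StarOrderedRing R] {A : Matrix m m R} (hA : A.PosSemidef) {B W : Matrix m n R}
    (hW : A * W = B) {D : Matrix n n R} (hS : (D - Bᴴ * W).PosSemidef) :
    (fromBlocks A B Bᴴ D).PosSemidef := by
  rw [fromBlocks_eq_conjTranspose_mul_mul hA.isHermitian hW]
  exact (hA.fromBlocks_zero_zero hS).conjTranspose_mul_mul_same _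

end Blocks

theorem rank_of_fin_one_eq_zero_iff [Field R] (x : R) :
    (of fun _ _ : Fin 1 => x).rank = 0 ↔ x = 0 := by
  constructor
  · intro h
    by_contra hx
    have hunit : IsUnit (of fun _ _ : Fin 1 => x) := by
      rw [isUnit_iff_isUnit_det, det_unique]
      exact Ne.isUnit hx
    simp [rank_of_isUnit _ hunit] at h
  · rintro rfl
    exact rank_zero

theorem mulVec_mulVec_eq_self_of_orthogonal_ker [Fintype m] [Field R] [LinearOrder R]
    [IsStrictOrderedRing R] {A Ad : Matrix m m R} (hA : Aᵀ = A) (h1 : A * Ad * A = A)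
    (h3 : (A * Ad)ᵀ = A * Ad) {c : m → R} (hc : ∀ r, A *ᵥ r = 0 → c ⬝ᵥ r = 0) : A *ᵥ (Ad *ᵥ c) = c := by
  have hAAAd : A * (A * Ad) = A := by
    calc A * (A * Ad) = (A * Ad * A)ᵀ := by rw [transpose_mul, h3, hA]
      _ = A := by rw [h1, hA]
  set r := c - A *ᵥ (Ad *ᵥ c) with hr_def
  have hr : A *ᵥ r = 0 := by
    rw [hr_def, mulVec_sub, mulVec_mulVec, mulVec_mulVec, Matrix.mul_assoc, hAAAd, sub_self]
  have hrr : r ⬝ᵥ r = 0 :=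
    calc r ⬝ᵥ r = (c - A *ᵥ (Ad *ᵥ c)) ⬝ᵥ r := by rw [← hr_def]
      _ = c ⬝ᵥ r - (Ad *ᵥ c) ⬝ᵥ (A *ᵥ r) := by
        rw [sub_dotProduct, dotProduct_mulVec (Ad *ᵥ c), ← mulVec_transpose, hA]
      _ = 0 := by rw [hc r hr, hr, dotProduct_zero, sub_zero]
  exact (sub_eq_zero.mp (dotProduct_self_eq_zero.mp hrr)).symm

def bordered [Zero R] (A : Matrix m m R) (c : m → R) (t : R) : Matrix (m ⊕ Fin 1) (m ⊕ Fin 1) R :=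
  fromBlocks A (replicateCol (Fin 1) c) (replicateRow (Fin 1) c) (of fun _ _ => t)

theorem bordered_eq_fromBlocks [Zero R] [Star R] [TrivialStar R] (A : Matrix m m R) (c : m → R)
    (t : R) : bordered A c t
      = fromBlocks A (replicateCol (Fin 1) c) (replicateCol (Fin 1) c)ᴴ (of fun _ _ => t) := by
  rw [conjTranspose_replicateCol, star_trivial]
  rfl

section Bordered

variable [Fintype m]

theorem of_sub_conjTranspose_replicateCol_mul [CommRing R] [StarRing R] [TrivialStar R]
    (c w : m → R) (t : R) :
    (of fun _ _ : Fin 1 => t) - (replicateCol (Fin 1) c)ᴴ * replicateCol (Fin 1) w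
      = of fun _ _ => t - c ⬝ᵥ w := by
  rw [conjTranspose_replicateCol, star_trivial, replicateRow_mul_replicateCol]
  rfl

theorem dotProduct_eq_zero_of_posSemidef_bordered {A : Matrix m m ℝ} {c : m → ℝ} {t : ℝ}
    (h : (bordered A c t).PosSemidef) {r : m → ℝ} (hr : A *ᵥ r = 0) : c ⬝ᵥ r = 0 := by
  rw [bordered_eq_fromBlocks] at h
  simpa [conjTranspose_replicateCol, replicateRow_mulVec_eq_const] using
    congrFun (h.fromBlocks_conjTranspose_mulVec_eq_zero hr) 0

variable [DecidableEq m]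

theorem rank_bordered [Field R] [StarRing R] [TrivialStar R] {A : Matrix m m R} {c w : m → R}
    (hA : A.IsHermitian) (hw : A *ᵥ w = c) (t : R) :
    (bordered A c t).rank = A.rank + (of fun _ _ : Fin 1 => t - c ⬝ᵥ w).rank := by
  rw [bordered_eq_fromBlocks, rank_fromBlocks_of_mul_eq hA (by rw [← replicateCol_mulVec, hw]),
    of_sub_conjTranspose_replicateCol_mul]

theorem posSemidef_bordered [CommRing R] [PartialOrder R] [StarRing R] [StarOrderedRing R]
    [TrivialStar R] {A : Matrix m m R} {c w : m → R} (hA : A.PosSemidef) (hw : A *ᵥ w = c) :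
    (bordered A c (c ⬝ᵥ w)).PosSemidef := by
  rw [bordered_eq_fromBlocks]
  refine hA.fromBlocks_of_mul_eq (by rw [← replicateCol_mulVec, hw]) ?_
  rw [of_sub_conjTranspose_replicateCol_mul, sub_self]
  exact PosSemidef.zero

end Bordered

end Matrix

theorem stmt_5_general {k : ℕ} (A : Matrix (Fin k) (Fin k) ℝ) (hA : A.PosSemidef)
    (c : Fin k → ℝ) (t : ℝ)
    (Ad : Matrix (Fin k) (Fin k) ℝ)
    (h1 : A * Ad * A = A)
    (h3 : (A * Ad)ᵀ = A * Ad) :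
    ((Matrix.fromBlocks A (Matrix.of fun i (_ : Fin 1) => c i)
        (Matrix.of fun (_ : Fin 1) j => c j) (Matrix.of fun (_ _ : Fin 1) => t)).PosSemidef ∧
      (Matrix.fromBlocks A (Matrix.of fun i (_ : Fin 1) => c i)
        (Matrix.of fun (_ : Fin 1) j => c j) (Matrix.of fun (_ _ : Fin 1) => t)).rank =
          A.rank) ↔
      ((∃ w : Fin k → ℝ, c = A *ᵥ w) ∧ t = c ⬝ᵥ (Ad *ᵥ c)) := by
  change (bordered A c t).PosSemidef ∧ (bordered A c t).rank = A.rank ↔ _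
  constructor
  · rintro ⟨hpsd, hrank⟩
    have hAT : Aᵀ = A := by simpa [conjTranspose_eq_transpose_of_trivial] using hA.isHermitian.eq
    have hw : A *ᵥ (Ad *ᵥ c) = c := mulVec_mulVec_eq_self_of_orthogonal_ker hAT h1 h3
      fun r hr => dotProduct_eq_zero_of_posSemidef_bordered hpsd hr
    rw [rank_bordered hA.isHermitian hw, Nat.add_eq_left, rank_of_fin_one_eq_zero_iff,
      sub_eq_zero] at hrank
    exact ⟨⟨_, hw.symm⟩, hrank⟩
  · rintro ⟨⟨w, rfl⟩, rfl⟩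
    have hw : A *ᵥ (Ad *ᵥ (A *ᵥ w)) = A *ᵥ w := by rw [mulVec_mulVec, mulVec_mulVec, h1]
    refine ⟨posSemidef_bordered hA hw, ?_⟩
    rw [rank_bordered hA.isHermitian hw, sub_self, (rank_of_fin_one_eq_zero_iff _).mpr rfl,
      add_zero]

/-- For a real symmetric PSD `A`, the bordered matrix `[[A, c], [cᵀ, t]]` is PSD with the
same rank as `A` iff `c = A w` for some `w` and `t = cᵀ A† c`, where `A†` is the
Moore–Penrose inverse of `A` (characterized by the four Penrose equations). -/
theorem stmt_5 {k : ℕ} (A : Matrix (Fin k) (Fin k) ℝ) (hA : A.PosSemidef)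
    (c : Fin k → ℝ) (t : ℝ)
    (Ad : Matrix (Fin k) (Fin k) ℝ)
    (h1 : A * Ad * A = A) (h2 : Ad * A * Ad = Ad)
    (h3 : (A * Ad)ᵀ = A * Ad) (h4 : (Ad * A)ᵀ = Ad * A) :
    ((Matrix.fromBlocks A (Matrix.of fun i (_ : Fin 1) => c i)
        (Matrix.of fun (_ : Fin 1) j => c j) (Matrix.of fun (_ _ : Fin 1) => t)).PosSemidef ∧
      (Matrix.fromBlocks A (Matrix.of fun i (_ : Fin 1) => c i)
        (Matrix.of fun (_ : Fin 1) j => c j) (Matrix.of fun (_ _ : Fin 1) => t)).rank =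
          A.rank) ↔
      ((∃ w : Fin k → ℝ, c = A *ᵥ w) ∧ t = c ⬝ᵥ (Ad *ᵥ c)) :=
  stmt_5_general A hA c t Ad h1 h3
end

section
/- Let A be a real symmetric positive definite (k−1)×(k−1) matrix (indexed to sit as the middle principal block), b, c ∈ ℝ^{k−1}, and real numbers d, g, t. Consider the symmetric (k+1)×(k+1) matrix M(t) = [[d − a·t, bᵀ, g],[b, A, c],[g, cᵀ, t]] with a > 0. Define t_min := cᵀA⁻¹c and t_max := (d − bᵀA⁻¹b)/a, and E := bᵀA⁻¹c cᵀA⁻¹b − 2 bᵀA⁻¹c·g + g². Then there exists t ∈ ℝ with M(t) positive semidefinite if and only if t_min ≤ t_max and (t_max − t_min)² ≥ 4E/a. -/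
open Matrix

/-- The symmetric bordered matrix `[[dtop, bᵀ, g], [b, A, c], [g, cᵀ, tbot]]`. -/
def borderMat {n : ℕ} (A : Matrix (Fin n) (Fin n) ℝ) (b c : Fin n → ℝ)
    (dtop g tbot : ℝ) : Matrix (Unit ⊕ Fin n ⊕ Unit) (Unit ⊕ Fin n ⊕ Unit) ℝ :=
  Matrix.of fun i j =>
    match i, j with
    | Sum.inl _, Sum.inl _ => dtop
    | Sum.inl _, Sum.inr (Sum.inl j) => b j
    | Sum.inl _, Sum.inr (Sum.inr _) => g
    | Sum.inr (Sum.inl i), Sum.inl _ => b i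
    | Sum.inr (Sum.inl i), Sum.inr (Sum.inl j) => A i j
    | Sum.inr (Sum.inl i), Sum.inr (Sum.inr _) => c i
    | Sum.inr (Sum.inr _), Sum.inl _ => g
    | Sum.inr (Sum.inr _), Sum.inr (Sum.inl j) => c j
    | Sum.inr (Sum.inr _), Sum.inr (Sum.inr _) => tbot

/-- A `2 × 2` real symmetric matrix (indexed by `Unit ⊕ Unit`) is PSD iff its diagonal
entries are nonnegative and its determinant is nonnegative. -/
lemma psd2_iff {M : Matrix (Unit ⊕ Unit) (Unit ⊕ Unit) ℝ} {p q r : ℝ}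
    (hpp : M (Sum.inl ()) (Sum.inl ()) = p) (hq1 : M (Sum.inl ()) (Sum.inr ()) = q)
    (hq2 : M (Sum.inr ()) (Sum.inl ()) = q) (hr : M (Sum.inr ()) (Sum.inr ()) = r) :
    M.PosSemidef ↔ 0 ≤ p ∧ 0 ≤ r ∧ q ^ 2 ≤ p * r := by
  have hform : ∀ s u : ℝ, (star (Sum.elim (fun _ : Unit => s) (fun _ : Unit => u))) ⬝ᵥ
      (M *ᵥ (Sum.elim (fun _ : Unit => s) (fun _ : Unit => u)))
      = p * s ^ 2 + 2 * q * s * u + r * u ^ 2 := by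
    intro s u
    simp [dotProduct, mulVec, Fintype.sum_sum_type, hpp, hq1, hq2, hr]
    ring
  rw [posSemidef_iff_dotProduct_mulVec]
  constructor
  · rintro ⟨-, h⟩
    have key : ∀ s u : ℝ, 0 ≤ p * s ^ 2 + 2 * q * s * u + r * u ^ 2 := by
      intro s u; rw [← hform]; exact h _
    have h1 : 0 ≤ p := by have := key 1 0; linarith
    have h2 : 0 ≤ r := by have := key 0 1; linarith
    refine ⟨h1, h2, ?_⟩
    rcases eq_or_lt_of_le h1 with hp0 | hp0
    · have := key (-(r + 1)) q
      nlinarith [sq_nonneg q]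
    · have := key q (-p)
      nlinarith
  · rintro ⟨h1, h2, h3⟩
    constructor
    · ext i j
      rcases i with ⟨⟩ | ⟨⟩ <;> rcases j with ⟨⟩ | ⟨⟩ <;>
        simp [conjTranspose_apply, hpp, hq1, hq2, hr]
    · intro x
      have hx : x = Sum.elim (fun _ : Unit => x (Sum.inl ())) (fun _ : Unit => x (Sum.inr ())) := by
        ext (⟨⟩ | ⟨⟩) <;> rfl
      rw [hx, hform]
      set s := x (Sum.inl ()); set u := x (Sum.inr ())
      rcases eq_or_lt_of_le h1 with hp0 | hp0
      · have hq0 : q = 0 := by nlinarith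
        rw [hq0, ← hp0]; nlinarith [sq_nonneg u]
      · nlinarith [sq_nonneg (p * s + q * u), mul_nonneg (sub_nonneg.2 h3) (sq_nonneg u)]

/-- Reindexing equivalence putting the middle block first. -/
def reEquiv (n : ℕ) : (Fin n ⊕ (Unit ⊕ Unit)) ≃ (Unit ⊕ Fin n ⊕ Unit) where
  toFun := Sum.elim (fun i => Sum.inr (Sum.inl i))
    (Sum.elim (fun _ => Sum.inl ()) (fun _ => Sum.inr (Sum.inr ())))
  invFun := Sum.elim (fun _ => Sum.inr (Sum.inl ()))
    (Sum.elim (fun i => Sum.inl i) (fun _ => Sum.inr (Sum.inr ())))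
  left_inv := by rintro (i | ⟨⟩ | ⟨⟩) <;> rfl
  right_inv := by rintro (⟨⟩ | i | ⟨⟩) <;> rfl

/-- Schur-complement criterion for the bordered matrix. -/
lemma borderMat_posSemidef_iff {n : ℕ} (A : Matrix (Fin n) (Fin n) ℝ) (hA : A.PosDef)
    (b c : Fin n → ℝ) (dt g t : ℝ) :
    (borderMat A b c dt g t).PosSemidef ↔
      (0 ≤ dt - b ⬝ᵥ (A⁻¹ *ᵥ b) ∧ 0 ≤ t - c ⬝ᵥ (A⁻¹ *ᵥ c) ∧
        (g - b ⬝ᵥ (A⁻¹ *ᵥ c)) ^ 2 ≤ (dt - b ⬝ᵥ (A⁻¹ *ᵥ b)) * (t - c ⬝ᵥ (A⁻¹ *ᵥ c))) := by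
  haveI := hA.isUnit.invertible
  have hsym : A⁻¹ᵀ = A⁻¹ := by
    ext i j
    have h := congrFun (congrFun hA.1.inv i) j
    simpa using h
  set B : Matrix (Fin n) (Unit ⊕ Unit) ℝ :=
    Matrix.of fun i j => Sum.elim (fun _ : Unit => b i) (fun _ : Unit => c i) j with hB
  set D : Matrix (Unit ⊕ Unit) (Unit ⊕ Unit) ℝ :=
    Matrix.of fun i j =>
      match i, j with
      | Sum.inl _, Sum.inl _ => dt
      | Sum.inl _, Sum.inr _ => g
      | Sum.inr _, Sum.inl _ => g
      | Sum.inr _, Sum.inr _ => t with hD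
  have hsub : (borderMat A b c dt g t).submatrix (reEquiv n) (reEquiv n)
      = fromBlocks A B Bᴴ D := by
    ext i j
    rcases i with i | ⟨⟩ | ⟨⟩ <;> rcases j with j | ⟨⟩ | ⟨⟩ <;> rfl
  have hds : c ⬝ᵥ (A⁻¹ *ᵥ b) = b ⬝ᵥ (A⁻¹ *ᵥ c) := by
    rw [dotProduct_mulVec, ← hsym, vecMul_transpose, hsym, dotProduct_comm]
  have e11 : (Bᴴ * A⁻¹ * B) (Sum.inl ()) (Sum.inl ()) = b ⬝ᵥ (A⁻¹ *ᵥ b) := by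
    simp only [hB, Matrix.mul_apply, conjTranspose_apply, Matrix.of_apply, Sum.elim_inl,
      Sum.elim_inr, dotProduct, mulVec, Finset.mul_sum, Finset.sum_mul, star_trivial]
    rw [Finset.sum_comm]
    exact Finset.sum_congr rfl fun i _ => Finset.sum_congr rfl fun j _ => by ring
  have e12 : (Bᴴ * A⁻¹ * B) (Sum.inl ()) (Sum.inr ()) = b ⬝ᵥ (A⁻¹ *ᵥ c) := by
    simp only [hB, Matrix.mul_apply, conjTranspose_apply, Matrix.of_apply, Sum.elim_inl,
      Sum.elim_inr, dotProduct, mulVec, Finset.mul_sum, Finset.sum_mul, star_trivial]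
    rw [Finset.sum_comm]
    exact Finset.sum_congr rfl fun i _ => Finset.sum_congr rfl fun j _ => by ring
  have e21 : (Bᴴ * A⁻¹ * B) (Sum.inr ()) (Sum.inl ()) = b ⬝ᵥ (A⁻¹ *ᵥ c) := by
    rw [← hds]
    simp only [hB, Matrix.mul_apply, conjTranspose_apply, Matrix.of_apply, Sum.elim_inl,
      Sum.elim_inr, dotProduct, mulVec, Finset.mul_sum, Finset.sum_mul, star_trivial]
    rw [Finset.sum_comm]
    exact Finset.sum_congr rfl fun i _ => Finset.sum_congr rfl fun j _ => by ring
  have e22 : (Bᴴ * A⁻¹ * B) (Sum.inr ()) (Sum.inr ()) = c ⬝ᵥ (A⁻¹ *ᵥ c) := by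
    simp only [hB, Matrix.mul_apply, conjTranspose_apply, Matrix.of_apply, Sum.elim_inl,
      Sum.elim_inr, dotProduct, mulVec, Finset.mul_sum, Finset.sum_mul, star_trivial]
    rw [Finset.sum_comm]
    exact Finset.sum_congr rfl fun i _ => Finset.sum_congr rfl fun j _ => by ring
  rw [← posSemidef_submatrix_equiv (reEquiv n), hsub,
    Matrix.PosDef.fromBlocks₁₁ B D hA]
  exact psd2_iff (by rw [Matrix.sub_apply, e11]; rfl) (by rw [Matrix.sub_apply, e12]; rfl)
    (by rw [Matrix.sub_apply, e21]; rfl) (by rw [Matrix.sub_apply, e22]; rfl)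

/-- With `A ≻ 0`, `a > 0`, `t_min = cᵀA⁻¹c`, `t_max = (d − bᵀA⁻¹b)/a` and
`E = (bᵀA⁻¹c)² − 2(bᵀA⁻¹c)g + g²`, the matrix
`M(t) = [[d − a t, bᵀ, g], [b, A, c], [g, cᵀ, t]]` is PSD for some `t` iff
`t_min ≤ t_max` and `(t_max − t_min)² ≥ 4E/a`. -/
theorem stmt_12 {n : ℕ} (A : Matrix (Fin n) (Fin n) ℝ) (hA : A.PosDef)
    (b c : Fin n → ℝ) (d g a : ℝ) (ha : 0 < a) :
    (∃ t : ℝ, (borderMat A b c (d - a * t) g t).PosSemidef) ↔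
      (c ⬝ᵥ (A⁻¹ *ᵥ c) ≤ (d - b ⬝ᵥ (A⁻¹ *ᵥ b)) / a ∧
        4 * ((b ⬝ᵥ (A⁻¹ *ᵥ c)) ^ 2 - 2 * (b ⬝ᵥ (A⁻¹ *ᵥ c)) * g + g ^ 2) / a ≤
          ((d - b ⬝ᵥ (A⁻¹ *ᵥ b)) / a - c ⬝ᵥ (A⁻¹ *ᵥ c)) ^ 2) := by
  simp only [fun t => borderMat_posSemidef_iff A hA b c (d - a * t) g t]
  set u := b ⬝ᵥ (A⁻¹ *ᵥ b) with hu
  set v := c ⬝ᵥ (A⁻¹ *ᵥ c) with hv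
  set w := b ⬝ᵥ (A⁻¹ *ᵥ c) with hw
  have hTa : ((d - u) / a) * a = d - u := div_mul_cancel₀ _ ha.ne'
  set T := (d - u) / a with hT
  constructor
  · rintro ⟨t, h1, h2, h3⟩
    constructor
    · rw [hT, le_div_iff₀ ha]; nlinarith
    · rw [div_le_iff₀ ha]
      nlinarith [sq_nonneg (T + v - 2 * t), mul_nonneg ha.le (sq_nonneg (T + v - 2 * t))]
  · rintro ⟨h1, h2⟩
    have h2' : 4 * (w ^ 2 - 2 * w * g + g ^ 2) ≤ (T - v) ^ 2 * a := (div_le_iff₀ ha).1 h2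
    refine ⟨(T + v) / 2, ?_, ?_, ?_⟩
    · nlinarith [mul_nonneg ha.le (sub_nonneg.2 h1)]
    · linarith
    · nlinarith [mul_nonneg ha.le (sub_nonneg.2 h1)]
end

section
/- Let A be a real symmetric positive definite matrix, b and c vectors, d, g, a, t real with a > 0. If the matrix M(t) = [[d − a t, bᵀ, g],[b, A, c],[g, cᵀ, t]] is positive semidefinite, then cᵀA⁻¹c ≤ t ≤ (d − bᵀA⁻¹b)/a. -/
open Matrix

/-!
Evaluating the quadratic form of `M(t)` at `(1, -A⁻¹b, 0)` and at `(0, -A⁻¹c, 1)` yields the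
diagonal entries `d - a t - bᵀA⁻¹b` and `t - cᵀA⁻¹c` of the Schur complement of `A` in `M(t)`,
which are therefore nonnegative.
-/

lemma dotProduct_borderMat_mulVec {n : ℕ} (A : Matrix (Fin n) (Fin n) ℝ) (b c : Fin n → ℝ)
    (dtop g tbot α β : ℝ) (v : Fin n → ℝ) :
    Sum.elim (fun _ => α) (Sum.elim v fun _ => β) ⬝ᵥ
      (borderMat A b c dtop g tbot *ᵥ Sum.elim (fun _ => α) (Sum.elim v fun _ => β))
    = α * (dtop * α + b ⬝ᵥ v + g * β) + v ⬝ᵥ (α • b + A *ᵥ v + β • c)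
      + β * (g * α + c ⬝ᵥ v + tbot * β) := by
  simp only [borderMat, dotProduct, mulVec, of_apply, Fintype.sum_sum_type, Sum.elim_inl,
    Sum.elim_inr, Finset.univ_unique, Finset.sum_singleton, Pi.add_apply, Pi.smul_apply,
    smul_eq_mul, Finset.mul_sum, mul_add, Finset.sum_add_distrib]
  ring_nf

namespace Matrix.PosSemidef

variable {n : ℕ} {A : Matrix (Fin n) (Fin n) ℝ} {b c : Fin n → ℝ} {dtop g tbot : ℝ}

lemma dotProduct_inv_mulVec_le_borderMat_top (hM : (borderMat A b c dtop g tbot).PosSemidef)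
    (hA : IsUnit A.det) : b ⬝ᵥ (A⁻¹ *ᵥ b) ≤ dtop := by
  have h := hM.dotProduct_mulVec_nonneg (Sum.elim (fun _ => 1) (Sum.elim (-(A⁻¹ *ᵥ b)) fun _ => 0))
  rw [star_trivial, dotProduct_borderMat_mulVec, mulVec_neg, mulVec_mulVec,
    mul_nonsing_inv A hA, one_mulVec] at h
  simp only [one_smul, zero_smul, add_zero, add_neg_cancel, dotProduct_zero, mul_zero,
    zero_mul, mul_one, dotProduct_neg] at h
  linarith

lemma dotProduct_inv_mulVec_le_borderMat_bot (hM : (borderMat A b c dtop g tbot).PosSemidef)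
    (hA : IsUnit A.det) : c ⬝ᵥ (A⁻¹ *ᵥ c) ≤ tbot := by
  have h := hM.dotProduct_mulVec_nonneg (Sum.elim (fun _ => 0) (Sum.elim (-(A⁻¹ *ᵥ c)) fun _ => 1))
  rw [star_trivial, dotProduct_borderMat_mulVec, mulVec_neg, mulVec_mulVec,
    mul_nonsing_inv A hA, one_mulVec] at h
  simp only [one_smul, zero_smul, zero_add, neg_add_cancel, dotProduct_zero, mul_zero,
    zero_mul, one_mul, dotProduct_neg] at h
  linarith

end Matrix.PosSemidef

/-- If `M(t) = [[d − a t, bᵀ, g], [b, A, c], [g, cᵀ, t]]` is PSD with `A ≻ 0`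
and `a > 0`, then `cᵀA⁻¹c ≤ t ≤ (d − bᵀA⁻¹b)/a`. -/
theorem stmt_13 {n : ℕ} (A : Matrix (Fin n) (Fin n) ℝ) (hA : A.PosDef)
    (b c : Fin n → ℝ) (d g a t : ℝ) (ha : 0 < a)
    (hM : (borderMat A b c (d - a * t) g t).PosSemidef) :
    c ⬝ᵥ (A⁻¹ *ᵥ c) ≤ t ∧ t ≤ (d - b ⬝ᵥ (A⁻¹ *ᵥ b)) / a := by
  have hdet : IsUnit A.det := isUnit_iff_ne_zero.2 hA.det_pos.ne'
  refine ⟨hM.dotProduct_inv_mulVec_le_borderMat_bot hdet, ?_⟩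
  rw [le_div_iff₀ ha]
  linarith [hM.dotProduct_inv_mulVec_le_borderMat_top hdet]
end
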